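/- arXiv:1310.4594 — 6 statements merged into one kernel-verified Lean document; each statement's English description precedes it below -/
import Mathlib

section
/- Every reduced multiplicative lattice is 0-distributive, i.e., if a ∧ b = 0 and a ∧ c = 0 then a ∧ (b ∨ c) = 0. -/
variable {α : Type*}

/-- Iterated product `a^n` in a multiplicative lattice (with `a^0 = ⊤`). -/
def mpow [CompleteLattice α] (mul : α → α → α) (a : α) : ℕ → α
  | 0 => ⊤
  | n + 1 => mul a (mpow mul a n)

/-- `mul` makes the complete lattice `α` into a multiplicative lattice. -/
def IsMulLattice [CompleteLattice α] (mul : α → α → α) : Prop :=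
  (∀ a b : α, mul a b = mul b a) ∧
  (∀ a b c : α, mul (mul a b) c = mul a (mul b c)) ∧
  (∀ (a : α) (s : Set α), mul a (sSup s) = ⨆ b ∈ s, mul a b) ∧
  (∀ a b : α, mul a b ≤ a ⊓ b) ∧
  (∀ a : α, mul a ⊤ = a)

/-- The multiplicative lattice is reduced: the only nilpotent element is `⊥`. -/
def LatReduced [CompleteLattice α] (mul : α → α → α) : Prop :=
  ∀ (a : α) (n : ℕ), mpow mul a (n + 1) = ⊥ → a = ⊥

/-- `a* = sup {x | x·a = 0}`. -/
def starAnn [CompleteLattice α] (mul : α → α → α) (a : α) : α :=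
  sSup {x : α | mul x a = ⊥}

/-- A prime element of a multiplicative lattice. -/
def IsPrimeElt [CompleteLattice α] (mul : α → α → α) (p : α) : Prop :=
  p ≠ ⊤ ∧ ∀ a b : α, mul a b ≤ p → a ≤ p ∨ b ≤ p

/-- The zero-divisor graph `Γᵐ(L)` of a multiplicative lattice. -/
def zdg [CompleteLattice α] (mul : α → α → α) : SimpleGraph α where
  Adj a b := a ≠ b ∧ a ≠ ⊥ ∧ b ≠ ⊥ ∧ mul a b = ⊥ ∧ mul b a = ⊥
  symm := ⟨fun a b h => ⟨h.1.symm, h.2.2.1, h.2.1, h.2.2.2.2, h.2.2.2.1⟩⟩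
  loopless := ⟨fun a h => h.1 rfl⟩

/-- `Clique(Γᵐ(L)) < ∞`. -/
def CliqueBounded [CompleteLattice α] (mul : α → α → α) : Prop :=
  ∃ N : ℕ, ∀ s : Finset α, (zdg mul).IsClique ↑s → s.card ≤ N

namespace IsMulLattice

variable [CompleteLattice α] {mul : α → α → α}

theorem mul_sup (hL : IsMulLattice mul) (a b c : α) :
    mul a (b ⊔ c) = mul a b ⊔ mul a c := by
  rw [← sSup_pair, hL.2.2.1, iSup_pair]

theorem mul_le_mul (hL : IsMulLattice mul) {a a' b b' : α} (ha : a ≤ a') (hb : b ≤ b') :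
    mul a b ≤ mul a' b' := by
  have mono_right : ∀ {x y z : α}, y ≤ z → mul x y ≤ mul x z := fun {x y z} hyz => by
    rw [← sup_eq_right.2 hyz, hL.mul_sup]
    exact le_sup_left
  calc mul a b ≤ mul a b' := mono_right hb
    _ = mul b' a := hL.1 a b'
    _ ≤ mul b' a' := mono_right ha
    _ = mul a' b' := hL.1 b' a'

theorem mpow_two (hL : IsMulLattice mul) (a : α) : mpow mul a 2 = mul a a := by
  simp only [mpow, hL.2.2.2.2]

theorem inf_eq_bot_of_mul_eq_bot (hL : IsMulLattice mul) (hred : LatReduced mul) {a b : α}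
    (hab : mul a b = ⊥) : a ⊓ b = ⊥ := by
  refine hred _ 1 (le_bot_iff.1 ?_)
  calc mpow mul (a ⊓ b) 2 = mul (a ⊓ b) (a ⊓ b) := hL.mpow_two _
    _ ≤ mul a b := hL.mul_le_mul inf_le_left inf_le_right
    _ = ⊥ := hab

end IsMulLattice

theorem reduced_is_zero_distributive [CompleteLattice α] (mul : α → α → α)
    (hL : IsMulLattice mul) (hred : LatReduced mul) :
    ∀ a b c : α, a ⊓ b = ⊥ → a ⊓ c = ⊥ → a ⊓ (b ⊔ c) = ⊥ := by
  intro a b c hab hac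
  refine hL.inf_eq_bot_of_mul_eq_bot hred (le_bot_iff.1 ?_)
  calc mul a (b ⊔ c) = mul a b ⊔ mul a c := hL.mul_sup a b c
    _ ≤ a ⊓ b ⊔ a ⊓ c := sup_le_sup (hL.2.2.2.1 a b) (hL.2.2.2.1 a c)
    _ = ⊥ := by rw [hab, hac, sup_bot_eq]
end

section
/- In a 0-distributive lattice, every minimal prime semi-ideal is an ideal (i.e., closed under finite joins). -/
variable {α : Type*}

/-- A semi-ideal: a nonempty downward-closed subset. -/
def IsSemiIdeal [Lattice α] [OrderBot α] (I : Set α) : Prop :=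
  I.Nonempty ∧ ∀ a b : α, a ≤ b → b ∈ I → a ∈ I

/-- A prime semi-ideal: proper, and `a ⊓ b ∈ I` implies `a ∈ I` or `b ∈ I`. -/
def IsPrimeSemiIdeal [Lattice α] [OrderBot α] (I : Set α) : Prop :=
  IsSemiIdeal I ∧ I ≠ Set.univ ∧ ∀ a b : α, a ⊓ b ∈ I → a ∈ I ∨ b ∈ I

/-- A minimal prime semi-ideal: a prime semi-ideal minimal among prime semi-ideals. -/
def IsMinPrimeSemiIdeal [Lattice α] [OrderBot α] (I : Set α) : Prop :=
  IsPrimeSemiIdeal I ∧ ∀ J : Set α, IsPrimeSemiIdeal J → J ⊆ I → J = I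

/-- A filter: nonempty, upward closed and closed under binary meets. -/
def IsFilterSet [Lattice α] (F : Set α) : Prop :=
  F.Nonempty ∧ (∀ a b : α, a ≤ b → a ∈ F → b ∈ F) ∧
    ∀ a b : α, a ∈ F → b ∈ F → a ⊓ b ∈ F

/-
Every `a` in a minimal prime semi-ideal `I` is annihilated by some `f ∉ I`: otherwise, since `Iᶜ` is
a filter, the elements lying above no `g ⊓ a` with `g ∉ I` form a prime semi-ideal inside `I` that
misses `a`. Given `a, b ∈ I` with annihilators `f, g ∉ I`, 0-distributivity makes `f ⊓ g ∉ I`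
annihilate `a ⊔ b`; since `⊥ ∈ I`, primeness puts `a ⊔ b` in `I`.
-/

section SemiIdeal

variable [Lattice α] [OrderBot α] {I : Set α}

theorem IsSemiIdeal.bot_mem (hI : IsSemiIdeal I) : ⊥ ∈ I :=
  let ⟨x, hx⟩ := hI.1
  hI.2 ⊥ x bot_le hx

theorem IsPrimeSemiIdeal.isFilterSet_compl (hI : IsPrimeSemiIdeal I) : IsFilterSet Iᶜ := by
  obtain ⟨⟨-, hdown⟩, hproper, hprime⟩ := hI
  refine ⟨Set.nonempty_compl.mpr hproper, fun a b hab ha hb => ha (hdown a b hab hb), ?_⟩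
  intro a b ha hb hab
  exact (hprime a b hab).elim ha hb

theorem isPrimeSemiIdeal_setOf_forall_not_inf_le {F : Set α} (hF : IsFilterSet F) {a : α}
    (ha : ∀ g ∈ F, g ⊓ a ≠ ⊥) : IsPrimeSemiIdeal {x | ∀ g ∈ F, ¬ g ⊓ a ≤ x} := by
  obtain ⟨⟨g₀, hg₀⟩, -, hinf⟩ := hF
  refine ⟨⟨⟨⊥, fun g hg hle => ha g hg (le_bot_iff.mp hle)⟩, ?_⟩, ?_, ?_⟩
  · exact fun x y hxy hy g hg hle => hy g hg (hle.trans hxy)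
  · exact (Set.ne_univ_iff_exists_notMem _).mpr ⟨a, fun h => h g₀ hg₀ inf_le_right⟩
  · intro x y hxy
    by_contra! hxy'
    simp only [Set.mem_ofPred_eq, not_forall, not_not] at hxy'
    obtain ⟨⟨g, hg, hgx⟩, ⟨g', hg', hgy⟩⟩ := hxy'
    refine hxy (g ⊓ g') (hinf g g' hg hg') (le_inf ?_ ?_)
    · exact (inf_le_inf_right a inf_le_left).trans hgx
    · exact (inf_le_inf_right a inf_le_right).trans hgy

theorem IsMinPrimeSemiIdeal.exists_notMem_inf_eq_bot (hI : IsMinPrimeSemiIdeal I) {a : α}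
    (ha : a ∈ I) : ∃ f ∉ I, f ⊓ a = ⊥ := by
  by_contra! hne
  set J : Set α := {x | ∀ g ∈ Iᶜ, ¬ g ⊓ a ≤ x}
  have hJ : IsPrimeSemiIdeal J :=
    isPrimeSemiIdeal_setOf_forall_not_inf_le hI.1.isFilterSet_compl hne
  have hJI : J ⊆ I := fun x hx => by_contra fun hxI => hx x hxI inf_le_left
  obtain ⟨w, hw⟩ := Set.nonempty_compl.mpr hI.1.2.1
  have haJ : a ∉ J := fun h => h w hw inf_le_right
  exact haJ (hI.2 J hJ hJI ▸ ha)

end SemiIdeal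

theorem minPrimeSemiIdeal_isIdeal [Lattice α] [OrderBot α]
    (h0d : ∀ a b c : α, a ⊓ b = ⊥ → a ⊓ c = ⊥ → a ⊓ (b ⊔ c) = ⊥)
    (I : Set α) (hI : IsMinPrimeSemiIdeal I) :
    ∀ a ∈ I, ∀ b ∈ I, a ⊔ b ∈ I := by
  intro a ha b hb
  obtain ⟨f, hf, hfa⟩ := hI.exists_notMem_inf_eq_bot ha
  obtain ⟨g, hg, hgb⟩ := hI.exists_notMem_inf_eq_bot hb
  have hfg : f ⊓ g ∉ I := hI.1.isFilterSet_compl.2.2 f g hf hg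
  have hfga : f ⊓ g ⊓ a = ⊥ := le_bot_iff.mp (hfa ▸ inf_le_inf_right a inf_le_left)
  have hfgb : f ⊓ g ⊓ b = ⊥ := le_bot_iff.mp (hgb ▸ inf_le_inf_right b inf_le_right)
  have hbot : f ⊓ g ⊓ (a ⊔ b) ∈ I := h0d _ _ _ hfga hfgb ▸ hI.1.1.bot_mem
  exact (hI.1.2.2 _ _ hbot).resolve_left hfg
end

section
/- Let L be a reduced 1-compact compactly generated multiplicative lattice and x ∈ L. If x* is maximal among the set {a* : a ∈ L, a* ≠ 1}, then x* is a prime element of L. -/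
variable {α : Type*}

/-!
If `a ≰ x*`, then `a·x ≠ 0`, so `(a·x)* ≠ 1` (because `1·y = y`, an element with `y* = 1` is `0`).
Since `x* ≤ (a·x)*`, maximality gives `x* = (a·x)*`; and `a·b ≤ x*` means `b·(a·x) = 0`, so
`b ≤ (a·x)* = x*`.
-/

namespace IsMulLattice

variable [CompleteLattice α] {mul : α → α → α}

theorem mul_comm (hL : IsMulLattice mul) (a b : α) : mul a b = mul b a := hL.1 a b

theorem mul_assoc (hL : IsMulLattice mul) (a b c : α) : mul (mul a b) c = mul a (mul b c) :=
  hL.2.1 a b c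

theorem mul_sSup (hL : IsMulLattice mul) (a : α) (s : Set α) :
    mul a (sSup s) = ⨆ b ∈ s, mul a b :=
  hL.2.2.1 a s

theorem mul_top (hL : IsMulLattice mul) (a : α) : mul a ⊤ = a := hL.2.2.2.2 a

theorem top_mul (hL : IsMulLattice mul) (a : α) : mul ⊤ a = a := by
  rw [hL.mul_comm, hL.mul_top]

theorem mul_bot (hL : IsMulLattice mul) (a : α) : mul a ⊥ = ⊥ := by
  simpa using hL.mul_sSup a ∅

theorem mul_le_mul_left (hL : IsMulLattice mul) (a : α) {b c : α} (hbc : b ≤ c) :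
    mul a b ≤ mul a c := by
  have h := hL.mul_sSup a {b, c}
  rw [sSup_pair, sup_eq_right.mpr hbc] at h
  rw [h]
  exact le_iSup₂_of_le b (Set.mem_insert b {c}) le_rfl

theorem mul_le_mul_right (hL : IsMulLattice mul) (a : α) {b c : α} (hbc : b ≤ c) :
    mul b a ≤ mul c a := by
  rw [hL.mul_comm b, hL.mul_comm c]
  exact hL.mul_le_mul_left a hbc

theorem starAnn_mul_self (hL : IsMulLattice mul) (a : α) : mul (starAnn mul a) a = ⊥ := by
  rw [hL.mul_comm, starAnn, hL.mul_sSup, ← le_bot_iff]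
  refine iSup₂_le fun y hy => ?_
  rw [hL.mul_comm]
  exact hy.le

theorem mul_eq_bot_iff_le_starAnn (hL : IsMulLattice mul) {y a : α} :
    mul y a = ⊥ ↔ y ≤ starAnn mul a :=
  ⟨fun h => le_sSup h, fun h =>
    le_bot_iff.mp (hL.starAnn_mul_self a ▸ hL.mul_le_mul_right a h)⟩

theorem eq_bot_of_starAnn_eq_top (hL : IsMulLattice mul) {a : α} (h : starAnn mul a = ⊤) :
    a = ⊥ := by
  simpa [h, hL.top_mul] using hL.starAnn_mul_self a

theorem starAnn_le_starAnn_mul (hL : IsMulLattice mul) (a x : α) :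
    starAnn mul x ≤ starAnn mul (mul a x) := by
  refine sSup_le fun y (hy : mul y x = ⊥) => le_sSup (?_ : mul y (mul a x) = ⊥)
  rw [← hL.mul_assoc, hL.mul_comm y a, hL.mul_assoc, hy, hL.mul_bot]

end IsMulLattice

theorem maximal_annihilator_is_prime_general [CompleteLattice α]
    (mul : α → α → α) (hL : IsMulLattice mul) (x : α)
    (hne : starAnn mul x ≠ ⊤)
    (hmax : ∀ a : α, starAnn mul a ≠ ⊤ → starAnn mul x ≤ starAnn mul a →
      starAnn mul x = starAnn mul a) :
    IsPrimeElt mul (starAnn mul x) := by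
  refine ⟨hne, fun a b hab => or_iff_not_imp_left.mpr fun ha => ?_⟩
  have hax : mul a x ≠ ⊥ := fun h => ha (hL.mul_eq_bot_iff_le_starAnn.mp h)
  have hstar : starAnn mul x = starAnn mul (mul a x) :=
    hmax _ (fun h => hax (hL.eq_bot_of_starAnn_eq_top h)) (hL.starAnn_le_starAnn_mul a x)
  have hbax : mul b (mul a x) = ⊥ := by
    rw [← hL.mul_assoc, hL.mul_comm b a]
    exact hL.mul_eq_bot_iff_le_starAnn.mpr hab
  rw [hstar]
  exact hL.mul_eq_bot_iff_le_starAnn.mp hbax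

theorem maximal_annihilator_is_prime [CompleteLattice α] [IsCompactlyGenerated α]
    (mul : α → α → α) (hL : IsMulLattice mul) (hred : LatReduced mul)
    (htop : IsCompactElement (⊤ : α)) (x : α)
    (hne : starAnn mul x ≠ ⊤)
    (hmax : ∀ a : α, starAnn mul a ≠ ⊤ → starAnn mul x ≤ starAnn mul a →
      starAnn mul x = starAnn mul a) :
    IsPrimeElt mul (starAnn mul x) :=
  maximal_annihilator_is_prime_general mul hL x hne hmax
end

section
/- Let L be a reduced 1-compact compactly generated multiplicative lattice whose zero-divisor graph Γᵐ(L) has finite clique number. Then the set {x* : x ∈ L, x ≠ 0} satisfies the ascending chain condition. -/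
variable {α : Type*}

/-!
If `x₀*, x₁*, …` were a strictly increasing chain of annihilators, the elements
`cₖ = x_{k+1}* · xₖ` would be nonzero (as `x_{k+1}* ≰ xₖ*`) and pairwise orthogonal
(for `i < j`, `cᵢ · cⱼ ≤ x_{i+1}* · xⱼ ≤ xⱼ* · xⱼ = 0`). Reducedness makes them pairwise
distinct, so they form arbitrarily large cliques in `Γᵐ(L)`.
-/

section

variable [CompleteLattice α] {mul : α → α → α}

namespace IsMulLattice

theorem mul_le_right (hL : IsMulLattice mul) (a b : α) : mul a b ≤ b :=
  (hL.2.2.2.1 a b).trans inf_le_right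

theorem mul_mono_right (hL : IsMulLattice mul) (c : α) {a b : α} (h : a ≤ b) :
    mul c a ≤ mul c b := by
  have hd := hL.2.2.1 c {a, b}
  rw [sSup_pair, sup_eq_right.mpr h] at hd
  rw [hd]
  exact le_biSup (mul c) (Set.mem_insert a {b})

theorem mul_mono_left (hL : IsMulLattice mul) (c : α) {a b : α} (h : a ≤ b) :
    mul a c ≤ mul b c := by
  rw [hL.mul_comm a, hL.mul_comm b]
  exact hL.mul_mono_right c h

theorem mul_eq_bot_of_le_starAnn (hL : IsMulLattice mul) {a b : α} (h : b ≤ starAnn mul a) :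
    mul b a = ⊥ :=
  le_bot_iff.mp <| (hL.mul_mono_left a h).trans (hL.starAnn_mul_self a).le

end IsMulLattice

theorem LatReduced.eq_bot_of_mul_self_eq_bot (hred : LatReduced mul) (hL : IsMulLattice mul)
    {a : α} (h : mul a a = ⊥) : a = ⊥ :=
  hred a 1 <| by
    change mul a (mul a ⊤) = ⊥
    rw [hL.2.2.2.2, h]

theorem not_cliqueBounded_of_orthogonal (hL : IsMulLattice mul) (hred : LatReduced mul)
    {c : ℕ → α} (hne : ∀ k, c k ≠ ⊥) (horth : ∀ i j, i < j → mul (c i) (c j) = ⊥) :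
    ¬CliqueBounded mul := by
  have hpair : ∀ i j, i ≠ j → mul (c i) (c j) = ⊥ := fun i j hij => by
    rcases hij.lt_or_gt with h | h
    · exact horth i j h
    · rw [hL.mul_comm]
      exact horth j i h
  have hinj : Function.Injective c := fun i j hij => by
    by_contra hij_ne
    have hsq := hpair i j hij_ne
    rw [hij] at hsq
    exact hne j (hred.eq_bot_of_mul_self_eq_bot hL hsq)
  have hclique : (zdg mul).IsClique (Set.range c) := by
    rintro _ ⟨i, rfl⟩ _ ⟨j, rfl⟩ hcij
    have hij : i ≠ j := fun e => hcij (congrArg c e)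
    exact ⟨hcij, hne i, hne j, hpair i j hij, hpair j i hij.symm⟩
  rintro ⟨N, hN⟩
  have hcard := hN ((Finset.range (N + 1)).map ⟨c, hinj⟩)
    (hclique.subset (by simp))
  simp at hcard

theorem not_cliqueBounded_of_strictMono_starAnn (hL : IsMulLattice mul) (hred : LatReduced mul)
    {x : ℕ → α} (hx : StrictMono fun k => starAnn mul (x k)) : ¬CliqueBounded mul := by
  refine not_cliqueBounded_of_orthogonal (c := fun k => mul (starAnn mul (x (k + 1))) (x k))
    hL hred (fun k hk => ?_) (fun i j hij => ?_)
  · exact (hx k.lt_succ_self).not_ge (le_sSup hk)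
  · have hann : mul (starAnn mul (x (i + 1))) (x j) = ⊥ :=
      hL.mul_eq_bot_of_le_starAnn (hx.monotone hij)
    refine le_bot_iff.mp ?_
    calc mul (mul (starAnn mul (x (i + 1))) (x i)) (mul (starAnn mul (x (j + 1))) (x j))
        ≤ mul (mul (starAnn mul (x (i + 1))) (x i)) (x j) :=
          hL.mul_mono_right _ (hL.mul_le_right _ _)
      _ = mul (starAnn mul (x (i + 1))) (mul (x i) (x j)) := hL.mul_assoc _ _ _
      _ ≤ mul (starAnn mul (x (i + 1))) (x j) := hL.mul_mono_right _ (hL.mul_le_right _ _)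
      _ = ⊥ := hann

theorem wellFoundedGT_range_starAnn (hL : IsMulLattice mul) (hred : LatReduced mul)
    (hclique : CliqueBounded mul) : WellFoundedGT (Set.range (starAnn mul)) := by
  rw [WellFoundedGT, isWellFounded_iff, RelEmbedding.wellFounded_iff_isEmpty]
  refine ⟨fun e => ?_⟩
  choose x hx using fun n => (e n).2
  refine not_cliqueBounded_of_strictMono_starAnn hL hred (x := x) (fun m n hmn => ?_) hclique
  simpa only [hx, Subtype.coe_lt_coe] using e.map_rel_iff.mpr hmn

end

theorem annihilators_acc_general [CompleteLattice α]
    (mul : α → α → α) (hL : IsMulLattice mul) (hred : LatReduced mul)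
    (hclique : CliqueBounded mul) :
    ∀ f : ℕ →o α, (∀ n : ℕ, ∃ x : α, x ≠ ⊥ ∧ f n = starAnn mul x) →
      ∃ n : ℕ, ∀ m : ℕ, n ≤ m → f m = f n := by
  intro f hf
  have := wellFoundedGT_range_starAnn hL hred hclique
  let g : ℕ →o Set.range (starAnn mul) :=
    ⟨fun n => ⟨f n, let ⟨x, _, hx⟩ := hf n; ⟨x, hx.symm⟩⟩, fun _ _ h => f.mono h⟩
  obtain ⟨n, hn⟩ := WellFoundedGT.monotone_chain_condition g
  exact ⟨n, fun m hm => congrArg Subtype.val (hn m hm).symm⟩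

theorem annihilators_acc [CompleteLattice α] [IsCompactlyGenerated α]
    (mul : α → α → α) (hL : IsMulLattice mul) (hred : LatReduced mul)
    (htop : IsCompactElement (⊤ : α))
    (hclique : CliqueBounded mul) :
    ∀ f : ℕ →o α, (∀ n : ℕ, ∃ x : α, x ≠ ⊥ ∧ f n = starAnn mul x) →
      ∃ n : ℕ, ∀ m : ℕ, n ≤ m → f m = f n :=
  annihilators_acc_general mul hL hred hclique
end

section
/- There exists a finite non-reduced multiplicative lattice L for which the chromatic number of the zero-divisor graph Γᵐ(L) strictly exceeds its clique number: χ(Γᵐ(L)) = 4 > 3 = Clique(Γᵐ(L)). -/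
variable {α : Type*}

/-!
The element `f` is a nonzero nilpotent (`f · f = 0`) that annihilates everything except `⊤`, so
in `Γᵐ(L)` it is adjacent to every other vertex. Two pentagon vertices multiply to `0` exactly
when they are not adjacent in the pentagon, so `a, c, e, b, d` is a 5-cycle of `Γᵐ(L)`. With `f`
as hub this is an odd wheel, which is not 3-colourable; on the other hand every triangle of
`Γᵐ(L)` passes through `f`, so `Γᵐ(L)` has no 4-clique.
-/

theorem map_sSup_of_finite {γ δ : Type*} [CompleteLattice γ] [CompleteLattice δ] (g : γ → δ)
    (hbot : g ⊥ = ⊥) (hsup : ∀ x y, g (x ⊔ y) = g x ⊔ g y) {s : Set γ} (hs : s.Finite) :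
    g (sSup s) = ⨆ b ∈ s, g b := by
  induction s, hs using Set.Finite.induction_on with
  | empty => simpa using hbot
  | insert _ _ ih => rw [sSup_insert, hsup, ih, iSup_insert]

theorem isMulLattice_of_finite [CompleteLattice α] [Finite α] {mul : α → α → α}
    (comm : ∀ a b, mul a b = mul b a) (assoc : ∀ a b c, mul (mul a b) c = mul a (mul b c))
    (mul_bot : ∀ a, mul a ⊥ = ⊥) (mul_sup : ∀ a b c, mul a (b ⊔ c) = mul a b ⊔ mul a c)
    (mul_le_inf : ∀ a b, mul a b ≤ a ⊓ b) (mul_top : ∀ a, mul a ⊤ = a) :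
    IsMulLattice mul :=
  ⟨comm, assoc, fun a _ => map_sSup_of_finite (mul a) (mul_bot a) (mul_sup a) (Set.toFinite _),
    mul_le_inf, mul_top⟩

theorem not_latReduced_of_mul_self_eq_bot [CompleteLattice α] {mul : α → α → α}
    (mul_top : ∀ a, mul a ⊤ = a) {a : α} (ha : a ≠ ⊥) (haa : mul a a = ⊥) :
    ¬ LatReduced mul := fun h =>
  ha (h a 1 (by simp only [mpow, mul_top, haa]))

namespace SimpleGraph

variable {V : Type*} {G : SimpleGraph V}

theorem cliqueNum_eq_of_isNClique_of_cliqueFree [Finite V] {n : ℕ} {s : Finset V}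
    (hs : G.IsNClique n s) (hfree : G.CliqueFree (n + 1)) : G.cliqueNum = n := by
  obtain ⟨t, ht⟩ := G.exists_isNClique_cliqueNum
  refine le_antisymm ?_ (hs.card_eq ▸ hs.isClique.card_le_cliqueNum)
  by_contra! hlt
  exact ht.not_cliqueFree (hfree.mono hlt)

theorem cliqueFree_four_of_forall_isNClique_three_mem [DecidableEq V] {v : V}
    (h : ∀ s, G.IsNClique 3 s → v ∈ s) : G.CliqueFree 4 := by
  intro s hs
  have hcard : 3 ≤ (s.erase v).card := by
    have := Finset.pred_card_le_card_erase (s := s) (a := v)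
    rw [hs.card_eq] at this
    omega
  obtain ⟨t, hts, ht⟩ := Finset.exists_subset_card_eq hcard
  have htriangle : G.IsNClique 3 t :=
    ⟨hs.isClique.subset (by simpa using hts.trans (s.erase_subset v)), ht⟩
  exact Finset.notMem_erase v s (hts (h t htriangle))

private theorem fin_three_no_wheel_coloring :
    ∀ (hub : Fin 3) (rim : Fin 5 → Fin 3), (∀ i, hub ≠ rim i) → (∀ i, rim i ≠ rim (i + 1)) →
      False := by
  set_option maxRecDepth 10000 in decide

theorem not_colorable_three_of_wheel (hub : V) (rim : Fin 5 → V) (hhub : ∀ i, G.Adj hub (rim i))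
    (hrim : ∀ i, G.Adj (rim i) (rim (i + 1))) : ¬ G.Colorable 3 := fun ⟨C⟩ =>
  fin_three_no_wheel_coloring (C hub) (C ∘ rim) (fun i => C.valid (hhub i))
    (fun i => C.valid (hrim i))

end SimpleGraph

/-- The face lattice of a pentagon `a b c d e`, with the empty face `f` and the whole pentagon
`v`, and a new bottom `bot` and top `top` adjoined. -/
inductive Pentagon : Type
  | bot | f | a | b | c | d | e | ab | bc | cd | de | ea | v | top
  deriving DecidableEq

namespace Pentagon

instance : Fintype Pentagon :=
  ⟨⟨↑[bot, f, a, b, c, d, e, ab, bc, cd, de, ea, v, top], by decide⟩,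
    fun x => by cases x <;> decide⟩

/-- The vertex set of a face as a bitmask, `a = 1, b = 2, c = 4, d = 8, e = 16`. -/
def mask : Pentagon → ℕ
  | bot => 0 | f => 0 | top => 0
  | a => 1 | b => 2 | c => 4 | d => 8 | e => 16
  | ab => 3 | bc => 6 | cd => 12 | de => 24 | ea => 17
  | v => 31

def ble (x y : Pentagon) : Bool :=
  x = bot || y = top || (x ≠ top && y ≠ bot && (mask x ||| mask y == mask y))

instance : LE Pentagon := ⟨fun x y => ble x y = true⟩

instance : DecidableRel (· ≤ · : Pentagon → Pentagon → Prop) := fun x y =>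
  inferInstanceAs (Decidable (ble x y = true))

/-- The smallest face containing the vertices of a mask (only called on incomparable faces). -/
def ofMaskJoin : ℕ → Pentagon
  | 1 => a | 2 => b | 4 => c | 8 => d | 16 => e
  | 3 => ab | 6 => bc | 12 => cd | 24 => de | 17 => ea
  | 0 => f
  | _ => v

/-- The largest face inside a mask (only called on intersections of incomparable faces). -/
def ofMaskMeet : ℕ → Pentagon
  | 1 => a | 2 => b | 4 => c | 8 => d | 16 => e
  | _ => f

def sup (x y : Pentagon) : Pentagon :=
  if ble x y then y else if ble y x then x else ofMaskJoin (mask x ||| mask y)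

def inf (x y : Pentagon) : Pentagon :=
  if ble x y then x else if ble y x then y else ofMaskMeet (mask x &&& mask y)

instance : Lattice Pentagon where
  le := (· ≤ ·)
  le_refl := by decide
  le_trans := by decide
  le_antisymm := by decide
  sup := sup
  le_sup_left := by decide
  le_sup_right := by decide
  sup_le := by decide
  inf := inf
  inf_le_left := by decide
  inf_le_right := by decide
  le_inf := by decide

instance : BoundedOrder Pentagon where
  top := top
  le_top := by decide
  bot := bot
  bot_le := by decide

noncomputable instance : CompleteLattice Pentagon := Fintype.toCompleteLattice Pentagon

/-- The closed neighbourhood in the pentagon: the mask together with its two cyclic rotations. -/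
def closedNbhdMask (m : ℕ) : ℕ :=
  (m ||| (m <<< 1) ||| (m >>> 4) ||| (m <<< 4) ||| (m >>> 1)) &&& 31

/-- `top` is the unit; otherwise `x · y = f` if some vertex of `x` is equal or adjacent to some
vertex of `y`, and `x · y = bot` if not. -/
def mul (x y : Pentagon) : Pentagon :=
  if x = top then y else if y = top then x
  else if mask x &&& closedNbhdMask (mask y) ≠ 0 then f else bot

noncomputable instance : DecidableRel (zdg mul).Adj := fun x y =>
  inferInstanceAs (Decidable (x ≠ y ∧ x ≠ ⊥ ∧ y ≠ ⊥ ∧ mul x y = ⊥ ∧ mul y x = ⊥))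

theorem isMulLattice_mul : IsMulLattice mul :=
  isMulLattice_of_finite (by decide) (by decide) (by decide) (by decide) (by decide) (by decide)

theorem not_latReduced_mul : ¬ LatReduced mul :=
  not_latReduced_of_mul_self_eq_bot (by decide) (a := f) (by decide) (by decide)

/-- `f` gets its own colour and the 5-cycle `a c e b d` three more; an edge face is adjacent only
to `f` and to the opposite vertex. -/
noncomputable def coloring : (zdg mul).Coloring (Fin 4) :=
  SimpleGraph.Coloring.mk
    (fun | bot => 0 | f => 0 | top => 0 | v => 1
         | a => 1 | b => 2 | c => 2 | d => 3 | e => 1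
         | ab => 1 | bc => 2 | cd => 2 | de => 1 | ea => 1)
    (by decide)

theorem chromaticNumber_zdg_mul : (zdg mul).chromaticNumber = 4 :=
  SimpleGraph.chromaticNumber_eq_iff_colorable_not_colorable.mpr
    ⟨coloring.colorable,
      SimpleGraph.not_colorable_three_of_wheel f ![a, c, e, b, d] (by decide) (by decide)⟩

theorem mem_of_isNClique_three_zdg_mul (s : Finset Pentagon) (hs : (zdg mul).IsNClique 3 s) :
    f ∈ s := by
  obtain ⟨x, y, z, hxy, hxz, hyz, rfl⟩ := SimpleGraph.is3Clique_iff.mp hs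
  have triangle_through_f : ∀ x y z, (zdg mul).Adj x y → (zdg mul).Adj x z →
      (zdg mul).Adj y z → x = f ∨ y = f ∨ z = f := by
    decide
  rcases triangle_through_f x y z hxy hxz hyz with rfl | rfl | rfl <;> simp

theorem cliqueNum_zdg_mul : (zdg mul).cliqueNum = 3 :=
  SimpleGraph.cliqueNum_eq_of_isNClique_of_cliqueFree (s := {f, a, c}) (by decide)
    (SimpleGraph.cliqueFree_four_of_forall_isNClique_three_mem mem_of_isNClique_three_zdg_mul)

end Pentagon

theorem beck_fails_nonreduced :
    ∃ (β : Type) (_ : Fintype β) (_ : CompleteLattice β) (mul : β → β → β),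
      IsMulLattice mul ∧ ¬ LatReduced mul ∧
      (zdg mul).chromaticNumber = 4 ∧ (zdg mul).cliqueNum = 3 :=
  ⟨Pentagon, inferInstance, inferInstance, Pentagon.mul, Pentagon.isMulLattice_mul,
    Pentagon.not_latReduced_mul, Pentagon.chromaticNumber_zdg_mul, Pentagon.cliqueNum_zdg_mul⟩
end

section
/- Let L be a reduced multiplicative lattice with finitely many minimal prime elements p₁,…,pₙ whose meet is 0. Define f(x) = min{i : x ≰ pᵢ} for each vertex x of Γᵐ(L). Then f is a proper coloring of Γᵐ(L), i.e., adjacent vertices receive different colors. -/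
variable {α : Type*}

/-!
Since the minimal primes meet in `0`, every nonzero `x` escapes some `pᵢ`, so `f x` is an index
with `x ≰ p (f x)`. If `x · y = 0` and `f x = f y = i`, then `x · y ≤ pᵢ` with `pᵢ` prime forces
`x ≤ pᵢ` or `y ≤ pᵢ`, a contradiction.
-/

theorem IsPrimeElt.le_or_le_of_mul_eq_bot [CompleteLattice α] {mul : α → α → α} {p a b : α}
    (hp : IsPrimeElt mul p) (hab : mul a b = ⊥) : a ≤ p ∨ b ≤ p :=
  hp.2 a b (hab ▸ bot_le)

theorem exists_not_le_of_iInf_eq_bot [CompleteLattice α] {ι : Sort*} {p : ι → α}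
    (hp : ⨅ i, p i = ⊥) {x : α} (hx : x ≠ ⊥) : ∃ i, ¬ x ≤ p i := by
  by_contra! h
  exact hx (le_bot_iff.mp (hp ▸ le_iInf h))

theorem Nat.exists_fin_val_eq_sInf {n : ℕ} {P : Fin n → Prop} (h : ∃ i, P i) :
    ∃ i : Fin n, P i ∧ (i : ℕ) = sInf {i : ℕ | ∃ h : i < n, P ⟨i, h⟩} := by
  obtain ⟨hlt, hP⟩ := Nat.sInf_mem (s := {i : ℕ | ∃ h : i < n, P ⟨i, h⟩})
    (h.elim fun i hi => ⟨i, i.2, hi⟩)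
  exact ⟨⟨_, hlt⟩, hP, rfl⟩

theorem min_index_coloring_proper_general [CompleteLattice α] (mul : α → α → α)
    (n : ℕ) (p : Fin n → α)
    (hp : ∀ i, IsPrimeElt mul (p i) ∧ ∀ q : α, IsPrimeElt mul q → q ≤ p i → q = p i)
    (hmeet : ⨅ i, p i = ⊥) :
    ∀ x y : α, x ≠ ⊥ → y ≠ ⊥ → x ≠ y → mul x y = ⊥ →
      sInf {i : ℕ | ∃ h : i < n, ¬ x ≤ p ⟨i, h⟩} ≠
        sInf {i : ℕ | ∃ h : i < n, ¬ y ≤ p ⟨i, h⟩} := by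
  intro x y hx hy _ hmul heq
  obtain ⟨i, hxi, hi⟩ := Nat.exists_fin_val_eq_sInf (exists_not_le_of_iInf_eq_bot hmeet hx)
  obtain ⟨j, hyj, hj⟩ := Nat.exists_fin_val_eq_sInf (exists_not_le_of_iInf_eq_bot hmeet hy)
  obtain rfl : i = j := Fin.ext (hi.trans (heq.trans hj.symm))
  exact ((hp i).1.le_or_le_of_mul_eq_bot hmul).elim hxi hyj

theorem min_index_coloring_proper [CompleteLattice α] (mul : α → α → α)
    (hL : IsMulLattice mul) (hred : LatReduced mul) (n : ℕ) (p : Fin n → α)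
    (hp : ∀ i, IsPrimeElt mul (p i) ∧ ∀ q : α, IsPrimeElt mul q → q ≤ p i → q = p i)
    (hmeet : ⨅ i, p i = ⊥) :
    ∀ x y : α, x ≠ ⊥ → y ≠ ⊥ → x ≠ y → mul x y = ⊥ →
      sInf {i : ℕ | ∃ h : i < n, ¬ x ≤ p ⟨i, h⟩} ≠
        sInf {i : ℕ | ∃ h : i < n, ¬ y ≤ p ⟨i, h⟩} :=
  min_index_coloring_proper_general mul n p hp hmeet
end
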